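/- (Corollary A.2, dominance of closed forms.) For every natural number N ≥ 1, every L ≥ 1, and every p : Fin L → ℝ with 0 < p_j < 1 for all j, one has ∏_{j=1}^{L} (1 − (1 − p_j)^N) ≥ 1 − (1 − ∏_{j=1}^{L} p_j)^N. -/
import Mathlib

lemma key_pow_ineq (x y : ℝ) (hx0 : 0 ≤ x) (hx1 : x ≤ 1) (hy0 : 0 ≤ y)
    (hy1 : y ≤ 1) (N : ℕ) :
    x ^ N + y ^ N ≤ (x + y - x * y) ^ N + (x * y) ^ N := by
  set s : ℝ := x + y - x * y with hs
  have hxs : x ≤ s := by nlinarith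
  have hys : y ≤ s := by nlinarith
  have h1 : s ^ N - x ^ N = (∑ i ∈ Finset.range N, s ^ i * x ^ (N - 1 - i)) * (s - x) :=
    (geom_sum₂_mul s x N).symm
  have h2 : y ^ N - (x * y) ^ N =
      (∑ i ∈ Finset.range N, y ^ i * (x * y) ^ (N - 1 - i)) * (y - x * y) :=
    (geom_sum₂_mul y (x * y) N).symm
  have hsum : (∑ i ∈ Finset.range N, y ^ i * (x * y) ^ (N - 1 - i))
      ≤ (∑ i ∈ Finset.range N, s ^ i * x ^ (N - 1 - i)) := by
    apply Finset.sum_le_sum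
    intro i hi
    have hi' : i ≤ N - 1 := Nat.le_pred_of_lt (Finset.mem_range.mp hi)
    have hterm : y ^ i * (x * y) ^ (N - 1 - i) = (y ^ i * y ^ (N - 1 - i)) * x ^ (N - 1 - i) := by
      rw [mul_pow]; ring
    rw [hterm, ← pow_add]
    have hiadd : i + (N - 1 - i) = N - 1 := by omega
    rw [hiadd]
    have hxp : (0:ℝ) ≤ x ^ (N - 1 - i) := pow_nonneg hx0 _
    apply mul_le_mul_of_nonneg_right _ hxp
    calc y ^ (N - 1) ≤ y ^ i := pow_le_pow_of_le_one hy0 hy1 hi'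
      _ ≤ s ^ i := pow_le_pow_left₀ hy0 hys i
  have hfac : s - x = y - x * y := by ring
  have hfacpos : 0 ≤ y - x * y := by nlinarith
  have := mul_le_mul_of_nonneg_right hsum hfacpos
  rw [hfac] at h1
  linarith [h1, h2, this]

lemma prod_dom (N : ℕ) {ι : Type*} (s : Finset ι) (p : ι → ℝ)
    (hp : ∀ j ∈ s, 0 ≤ p j ∧ p j ≤ 1) :
    1 - (1 - ∏ j ∈ s, p j) ^ N ≤ ∏ j ∈ s, (1 - (1 - p j) ^ N) := by
  induction s using Finset.cons_induction with
  | empty =>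
      simp only [Finset.prod_empty, sub_self]
      have : (0:ℝ) ^ N ≥ 0 := pow_nonneg le_rfl N
      linarith
  | cons a t ha ih =>
      have hpa := hp a (Finset.mem_cons_self a t)
      have hpt : ∀ j ∈ t, 0 ≤ p j ∧ p j ≤ 1 := fun j hj =>
        hp j (Finset.mem_cons_of_mem hj)
      have ihq := ih hpt
      set q : ℝ := ∏ j ∈ t, p j with hq
      have hq0 : 0 ≤ q := Finset.prod_nonneg fun j hj => (hpt j hj).1
      have hq1 : q ≤ 1 := Finset.prod_le_one (fun j hj => (hpt j hj).1)
        (fun j hj => (hpt j hj).2)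
      rw [Finset.prod_cons, Finset.prod_cons, ← hq]
      set x : ℝ := 1 - p a with hx
      set y : ℝ := 1 - q with hyy
      have hx0 : 0 ≤ x := by simp [hx]; linarith [hpa.2]
      have hx1 : x ≤ 1 := by simp [hx]; linarith [hpa.1]
      have hy0 : 0 ≤ y := by simp [hyy]; linarith
      have hy1 : y ≤ 1 := by simp [hyy]; linarith
      have hkey := key_pow_ineq x y hx0 hx1 hy0 hy1 N
      have h1 : 1 - p a * q = x + y - x * y := by simp [hx, hyy]; ring
      have h2 : (1 - (1 - p a) ^ N) * (1 - (1 - q) ^ N) ≥ 1 - (1 - p a * q) ^ N := by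
        rw [h1]
        have : (1 - p a) ^ N = x ^ N := by rw [hx]
        have : (1 - q) ^ N = y ^ N := by rw [hyy]
        have hxyN : (0:ℝ) ≤ x ^ N * y ^ N := mul_nonneg (pow_nonneg hx0 N) (pow_nonneg hy0 N)
        have hxy : (x * y) ^ N = x ^ N * y ^ N := mul_pow x y N
        nlinarith [hkey]
      have hfac : 0 ≤ 1 - (1 - p a) ^ N := by
        have : (1 - p a) ^ N ≤ 1 := pow_le_one₀ hx0 hx1
        linarith
      calc 1 - (1 - p a * q) ^ N ≤ (1 - (1 - p a) ^ N) * (1 - (1 - q) ^ N) := h2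
        _ ≤ (1 - (1 - p a) ^ N) * ∏ j ∈ t, (1 - (1 - p j) ^ N) :=
          mul_le_mul_of_nonneg_left ihq hfac

/-- Corollary A.2 (dominance of closed forms). -/
theorem stmt_9 (L N : ℕ) (hL : 1 ≤ L) (hN : 1 ≤ N) (p : Fin L → ℝ)
    (hp : ∀ j, 0 < p j ∧ p j < 1) :
    ∏ j, (1 - (1 - p j) ^ N) ≥ 1 - (1 - ∏ j, p j) ^ N :=
  prod_dom N Finset.univ p (fun j _ => ⟨(hp j).1.le, (hp j).2.le⟩)
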